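/- Let p ∈ ℂ. There exists a unique dual pairing of Hopf algebras ⟨·,·⟩ : U_p^{(j)}(sl2) × SL_p^{(j)}(2,ℂ) → ℂ whose values on generators are ⟨h,α⟩ = 1, ⟨h,δ⟩ = −1, ⟨h,β⟩ = ⟨h,γ⟩ = 0, ⟨y,γ⟩ = 1, ⟨y,α⟩ = ⟨y,β⟩ = ⟨y,δ⟩ = 0, ⟨t,α⟩ = 1, ⟨t,β⟩ = p, ⟨t,γ⟩ = 0, ⟨t,δ⟩ = 1, ⟨t⁻¹,α⟩ = 1, ⟨t⁻¹,β⟩ = −p, ⟨t⁻¹,γ⟩ = 0, ⟨t⁻¹,δ⟩ = 1. -/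

import Mathlib

noncomputable section

open FreeAlgebra
open scoped TensorProduct

/-- The relations of the Jordanian quantum enveloping algebra `U_p^{(j)}(sl2)`, with
generators `h = ι ℂ 0`, `y = ι ℂ 1`, `t = ι ℂ 2`, `t⁻¹ = ι ℂ 3`. -/
inductive UjRel (p : ℂ) : FreeAlgebra ℂ (Fin 4) → FreeAlgebra ℂ (Fin 4) → Prop
  | tti : UjRel p (ι ℂ 2 * ι ℂ 3) 1
  | tit : UjRel p (ι ℂ 3 * ι ℂ 2) 1
  | ht : UjRel p (ι ℂ 0 * ι ℂ 2 - ι ℂ 2 * ι ℂ 0) (ι ℂ 2 * ι ℂ 2 - 1)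
  | yt : UjRel p (ι ℂ 1 * ι ℂ 2 - ι ℂ 2 * ι ℂ 1)
      ((-(p / 2)) • (ι ℂ 0 * ι ℂ 2 + ι ℂ 2 * ι ℂ 0))
  | hy : UjRel p (ι ℂ 0 * ι ℂ 1 - ι ℂ 1 * ι ℂ 0)
      ((-(1 / 2 : ℂ)) • (ι ℂ 1 * ι ℂ 2 + ι ℂ 2 * ι ℂ 1 + ι ℂ 1 * ι ℂ 3 + ι ℂ 3 * ι ℂ 1))

/-- The Jordanian quantum enveloping algebra `U_p^{(j)}(sl2)`. -/
abbrev Uj (p : ℂ) := RingQuot (UjRel p)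

/-- The images of the generators `h, y, t, t⁻¹` in `U_p^{(j)}(sl2)`. -/
def ugen (p : ℂ) (i : Fin 4) : Uj p := RingQuot.mkAlgHom ℂ (UjRel p) (ι ℂ i)

/-- The relations of the Jordanian quantum group `SL_p^{(j)}(2,ℂ)`, with generators
`α = ι ℂ 0`, `β = ι ℂ 1`, `γ = ι ℂ 2`, `δ = ι ℂ 3`. -/
inductive JRel (p : ℂ) : FreeAlgebra ℂ (Fin 4) → FreeAlgebra ℂ (Fin 4) → Prop
  | ab : JRel p (ι ℂ 0 * ι ℂ 1 - ι ℂ 1 * ι ℂ 0) (p • (ι ℂ 0 * ι ℂ 0) - p • 1)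
  | ag : JRel p (ι ℂ 0 * ι ℂ 2 - ι ℂ 2 * ι ℂ 0) ((-p) • (ι ℂ 2 * ι ℂ 2))
  | bd : JRel p (ι ℂ 1 * ι ℂ 3 - ι ℂ 3 * ι ℂ 1) (p • 1 - p • (ι ℂ 3 * ι ℂ 3))
  | gd : JRel p (ι ℂ 2 * ι ℂ 3 - ι ℂ 3 * ι ℂ 2) (p • (ι ℂ 2 * ι ℂ 2))
  | ad : JRel p (ι ℂ 0 * ι ℂ 3 - ι ℂ 3 * ι ℂ 0) (p • ((ι ℂ 0 - ι ℂ 3) * ι ℂ 2))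
  | bg : JRel p (ι ℂ 1 * ι ℂ 2 - ι ℂ 2 * ι ℂ 1)
      ((-p) • (ι ℂ 0 * ι ℂ 2) - p • (ι ℂ 2 * ι ℂ 3))
  | det : JRel p (ι ℂ 0 * ι ℂ 3 - ι ℂ 1 * ι ℂ 2 - p • (ι ℂ 0 * ι ℂ 2)) 1

/-- The Jordanian quantum group `SL_p^{(j)}(2,ℂ)`. -/
abbrev SLj (p : ℂ) := RingQuot (JRel p)

/-- The images of the generators `α, β, γ, δ` in `SL_p^{(j)}(2,ℂ)`. -/
def agen (p : ℂ) (i : Fin 4) : SLj p := RingQuot.mkAlgHom ℂ (JRel p) (ι ℂ i)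

/-- The pairing on tensor squares induced by a bilinear pairing `B`:
`(x ⊗ y, f ⊗ g) ↦ B x f · B y g`. -/
def pair2 {H A : Type*} [AddCommGroup H] [Module ℂ H] [AddCommGroup A] [Module ℂ A]
    (B : H →ₗ[ℂ] Module.Dual ℂ A) :
    (H ⊗[ℂ] H) →ₗ[ℂ] Module.Dual ℂ (A ⊗[ℂ] A) :=
  (TensorProduct.dualDistrib ℂ A A).comp (TensorProduct.map B B)

/-- `B` is a dual pairing of the Hopf algebras `H` (with comultiplication `ΔH` and
counit `εH`) and `A` (with comultiplication `ΔA` and counit `εA`):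
`⟨xy, f⟩ = Σ⟨x, f₍₁₎⟩⟨y, f₍₂₎⟩`, `⟨x, fg⟩ = Σ⟨x₍₁₎, f⟩⟨x₍₂₎, g⟩`, `⟨1, f⟩ = εA f`,
`⟨x, 1⟩ = εH x`. -/
def IsDualPairing {H A : Type*} [Ring H] [Algebra ℂ H] [Ring A] [Algebra ℂ A]
    (B : H →ₗ[ℂ] Module.Dual ℂ A)
    (ΔH : H →ₐ[ℂ] (H ⊗[ℂ] H)) (εH : H →ₐ[ℂ] ℂ)
    (ΔA : A →ₐ[ℂ] (A ⊗[ℂ] A)) (εA : A →ₐ[ℂ] ℂ) : Prop :=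
  (∀ (x y : H) (f : A), B (x * y) f = pair2 B (x ⊗ₜ[ℂ] y) (ΔA f)) ∧
  (∀ (x : H) (f g : A), B x (f * g) = pair2 B (ΔH x) (f ⊗ₜ[ℂ] g)) ∧
  (∀ f : A, B 1 f = εA f) ∧
  (∀ x : H, B x 1 = εH x)

/-- `ΔH` is the comultiplication of `U_p^{(j)}(sl2)`: `Δ(h) = h⊗t + t⁻¹⊗h`,
`Δ(y) = y⊗t + t⁻¹⊗y`, `Δ(t^{±1}) = t^{±1}⊗t^{±1}`. -/
def IsUComul (p : ℂ) (ΔH : Uj p →ₐ[ℂ] (Uj p ⊗[ℂ] Uj p)) : Prop :=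
  ΔH (ugen p 0) = ugen p 0 ⊗ₜ[ℂ] ugen p 2 + ugen p 3 ⊗ₜ[ℂ] ugen p 0 ∧
  ΔH (ugen p 1) = ugen p 1 ⊗ₜ[ℂ] ugen p 2 + ugen p 3 ⊗ₜ[ℂ] ugen p 1 ∧
  ΔH (ugen p 2) = ugen p 2 ⊗ₜ[ℂ] ugen p 2 ∧
  ΔH (ugen p 3) = ugen p 3 ⊗ₜ[ℂ] ugen p 3

/-- `εH` is the counit of `U_p^{(j)}(sl2)`. -/
def IsUCounit (p : ℂ) (εH : Uj p →ₐ[ℂ] ℂ) : Prop :=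
  εH (ugen p 0) = 0 ∧ εH (ugen p 1) = 0 ∧ εH (ugen p 2) = 1 ∧ εH (ugen p 3) = 1

/-- `ΔA` is the matrix comultiplication of `SL_p^{(j)}(2,ℂ)`. -/
def IsAComul (p : ℂ) (ΔA : SLj p →ₐ[ℂ] (SLj p ⊗[ℂ] SLj p)) : Prop :=
  ΔA (agen p 0) = agen p 0 ⊗ₜ[ℂ] agen p 0 + agen p 1 ⊗ₜ[ℂ] agen p 2 ∧
  ΔA (agen p 1) = agen p 0 ⊗ₜ[ℂ] agen p 1 + agen p 1 ⊗ₜ[ℂ] agen p 3 ∧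
  ΔA (agen p 2) = agen p 2 ⊗ₜ[ℂ] agen p 0 + agen p 3 ⊗ₜ[ℂ] agen p 2 ∧
  ΔA (agen p 3) = agen p 2 ⊗ₜ[ℂ] agen p 1 + agen p 3 ⊗ₜ[ℂ] agen p 3

/-- `εA` is the counit of `SL_p^{(j)}(2,ℂ)`. -/
def IsACounit (p : ℂ) (εA : SLj p →ₐ[ℂ] ℂ) : Prop :=
  εA (agen p 0) = 1 ∧ εA (agen p 1) = 0 ∧ εA (agen p 2) = 0 ∧ εA (agen p 3) = 1

/-- The table of values of the pairing on generators (rows `h, y, t, t⁻¹`, columns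
`α, β, γ, δ`). -/
def vals (p : ℂ) : Fin 4 → Fin 4 → ℂ :=
  ![![1, 0, 0, -1], ![0, 0, 1, 0], ![1, p, 0, 1], ![1, -p, 0, 1]]

/-!
A bilinear form `B` with `⟨xy, f⟩ = ⟨x ⊗ y, Δf⟩` and `⟨1, f⟩ = ε(f)` is the same thing as an
algebra map from `U_p^{(j)}(sl2)` to the convolution algebra of `SL_p^{(j)}(2,ℂ)`. We send
`h, y, t, t⁻¹` to the matrix coefficients `(0,1), (0,2), (1,1), (0,0)` of a three-dimensional
representation of `SL_p^{(j)}(2,ℂ)`, so that `t` and `t⁻¹` are characters and `h`, `y` are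
`(t⁻¹, t)`-twisted derivations. For every defining relation of `U_p^{(j)}(sl2)` the difference of
its two sides is again a twisted derivation for a pair of characters, hence it vanishes as soon as
it vanishes at `1` and at `α, β, γ, δ`. Evaluation at `1` and on the fundamental matrix
`(α β; γ δ)` are algebra maps out of the convolution algebra, so this reduces to a computation with
`2 × 2` matrices. The remaining axioms hold on generators by the twisted Leibniz rules and
propagate because both sides are multiplicative; uniqueness holds because the axioms determine a
pairing from its values on generators.
-/

open WithConv Coalgebra

theorem RingQuot.adjoin_range_mkAlgHom_ι {R X : Type*} [CommSemiring R]
    (r : FreeAlgebra R X → FreeAlgebra R X → Prop) :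
    Algebra.adjoin R (Set.range fun x => RingQuot.mkAlgHom R r (ι R x)) = ⊤ := by
  rw [Set.range_comp' (RingQuot.mkAlgHom R r) (ι R), Algebra.adjoin_image,
    FreeAlgebra.adjoin_range_ι, Algebra.map_top, AlgHom.range_eq_top]
  exact RingQuot.mkAlgHom_surjective R r

theorem SLj.adjoin_range_agen (p : ℂ) : Algebra.adjoin ℂ (Set.range (agen p)) = ⊤ :=
  RingQuot.adjoin_range_mkAlgHom_ι _

theorem Uj.adjoin_range_ugen (p : ℂ) : Algebra.adjoin ℂ (Set.range (ugen p)) = ⊤ :=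
  RingQuot.adjoin_range_mkAlgHom_ι _

theorem SLj.algHom_ext {p : ℂ} {B : Type*} [Semiring B] [Algebra ℂ B] {F G : SLj p →ₐ[ℂ] B}
    (h : ∀ i, F (agen p i) = G (agen p i)) : F = G :=
  AlgHom.ext_of_adjoin_eq_top (SLj.adjoin_range_agen p) (by rintro _ ⟨i, rfl⟩; exact h i)

section TwistedDerivation

variable {R A : Type*} [CommRing R] [Semiring A] [Algebra R A]

/-- A multiplicative functional `ψ` is exactly an element of `twistedDerivations 0 ψ`, so characters
need no separate treatment. -/
def twistedDerivations (χ₁ χ₂ : WithConv (A →ₗ[R] R)) :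
    Submodule R (WithConv (A →ₗ[R] R)) where
  carrier := {θ | ∀ a b, θ (a * b) = χ₁ a * θ b + θ a * χ₂ b}
  add_mem' {θ θ'} hθ hθ' a b := by
    simp only [ofConv_add, LinearMap.add_apply, hθ a b, hθ' a b]
    ring
  zero_mem' a b := by simp
  smul_mem' c θ hθ a b := by
    simp only [ofConv_smul, LinearMap.smul_apply, smul_eq_mul, hθ a b]
    ring

variable {χ₁ χ₂ θ : WithConv (A →ₗ[R] R)}

theorem sub_mem_twistedDerivations {χ χ' : WithConv (A →ₗ[R] R)}
    (hχ : χ ∈ twistedDerivations 0 χ) (hχ' : χ' ∈ twistedDerivations 0 χ') :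
    χ - χ' ∈ twistedDerivations χ' χ := fun a b => by
  simp only [ofConv_sub, LinearMap.sub_apply, hχ a b, hχ' a b, ofConv_zero,
    LinearMap.zero_apply]
  ring

theorem eq_zero_of_mem_twistedDerivations (hθ : θ ∈ twistedDerivations χ₁ χ₂) {s : Set A}
    (hs : Algebra.adjoin R s = ⊤) (h1 : θ 1 = 0) (hs0 : ∀ a ∈ s, θ a = 0) : θ = 0 := by
  ext a
  induction (hs ▸ Algebra.mem_top : a ∈ Algebra.adjoin R s) using Algebra.adjoin_induction with
  | mem a ha => exact hs0 a ha
  | algebraMap r => simp [Algebra.algebraMap_eq_smul_one, h1]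
  | add a b _ _ ha hb => simp_all
  | mul a b _ _ ha hb => simp_all [hθ a b]

end TwistedDerivation

section Convolution

variable {R A : Type*} [CommRing R] [Semiring A] [Bialgebra R A]
  {χ₁ χ₂ χ₁' χ₂' D E ψ ψ' : WithConv (A →ₗ[R] R)}

theorem convMul_apply_mul (hD : D ∈ twistedDerivations χ₁ χ₂)
    (hE : E ∈ twistedDerivations χ₁' χ₂') (a b : A) :
    (D * E) (a * b) = (χ₁ * χ₁') a * (D * E) b + (χ₁ * E) a * (D * χ₂') b +
      (D * χ₁') a * (χ₂ * E) b + (D * E) a * (χ₂ * χ₂') b := by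
  simp only [LinearMap.convMul_apply, Bialgebra.comul_mul]
  induction comul (R := R) a with
  | zero => simp
  | add u u' hu hu' => simp only [add_mul, map_add, hu, hu']; ring
  | tmul a₁ a₂ =>
    induction comul (R := R) b with
    | zero => simp
    | add v v' hv hv' => simp only [mul_add, map_add, hv, hv']; ring
    | tmul b₁ b₂ =>
      simp only [Algebra.TensorProduct.tmul_mul_tmul, TensorProduct.map_tmul,
        LinearMap.mul'_apply, hD _ _, hE _ _]
      ring

theorem convMul_apply_one (D E : WithConv (A →ₗ[R] R)) : (D * E) 1 = D 1 * E 1 := by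
  simp [Bialgebra.comul_one, Algebra.TensorProduct.one_def]

theorem one_mem_twistedDerivations : (1 : WithConv (A →ₗ[R] R)) ∈ twistedDerivations 0 1 :=
  fun a b => by simp [Bialgebra.counit_mul]

theorem mul_mem_twistedDerivations_of_right (hD : D ∈ twistedDerivations χ₁ χ₂)
    (hψ : ψ ∈ twistedDerivations 0 ψ) : D * ψ ∈ twistedDerivations (χ₁ * ψ) (χ₂ * ψ) :=
  fun a b => by simp [convMul_apply_mul hD hψ a b]

theorem mul_mem_twistedDerivations_of_left (hψ : ψ ∈ twistedDerivations 0 ψ)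
    (hD : D ∈ twistedDerivations χ₁ χ₂) : ψ * D ∈ twistedDerivations (ψ * χ₁) (ψ * χ₂) :=
  fun a b => by simp [convMul_apply_mul hψ hD a b]

theorem mul_mem_twistedDerivations_zero (hψ : ψ ∈ twistedDerivations 0 ψ)
    (hψ' : ψ' ∈ twistedDerivations 0 ψ') : ψ * ψ' ∈ twistedDerivations 0 (ψ * ψ') := by
  simpa using mul_mem_twistedDerivations_of_right hψ hψ'

end Convolution

section Evaluation

variable {R C : Type*} [CommRing R] [AddCommMonoid C] [Module R C] [Coalgebra R C]

def evalGroupLike {g : C} (hg : IsGroupLikeElem R g) : WithConv (C →ₗ[R] R) →ₐ[R] R :=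
  AlgHom.ofLinearMap
    { toFun := fun φ => φ g
      map_add' := fun φ ψ => by rw [ofConv_add]; rfl
      map_smul' := fun c φ => by rw [ofConv_smul]; rfl }
    (by simp [hg])
    (fun _ _ => by simp [hg])

theorem evalGroupLike_apply {g : C} (hg : IsGroupLikeElem R g) (φ : WithConv (C →ₗ[R] R)) :
    evalGroupLike hg φ = φ g := rfl

variable {ι : Type*} [Fintype ι] [DecidableEq ι] (M : Matrix ι ι C)
  (hΔ : ∀ i j, comul (R := R) (M i j) = ∑ k, M i k ⊗ₜ M k j)
  (hε : ∀ i j, counit (R := R) (M i j) = (1 : Matrix ι ι R) i j)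

def evalMultiplicativeMatrix : WithConv (C →ₗ[R] R) →ₐ[R] Matrix ι ι R :=
  AlgHom.ofLinearMap
    { toFun := fun φ => M.map φ
      map_add' := fun _ _ => by ext; simp
      map_smul' := fun _ _ => by ext; simp }
    (by ext; simp [hε])
    (fun _ _ => by ext; simp [hΔ, Matrix.mul_apply])

theorem evalMultiplicativeMatrix_apply (φ : WithConv (C →ₗ[R] R)) :
    evalMultiplicativeMatrix M hΔ hε φ = M.map φ := rfl

end Evaluation

theorem pair2_tmul {H A : Type*} [AddCommGroup H] [Module ℂ H] [AddCommGroup A] [Module ℂ A]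
    (B : H →ₗ[ℂ] Module.Dual ℂ A) (x y : H) :
    pair2 B (x ⊗ₜ y) = TensorProduct.dualDistrib ℂ A A (B x ⊗ₜ B y) := rfl

section DualPairing

variable {H A : Type*} [Ring H] [Algebra ℂ H] [Ring A]

theorem IsDualPairing.ext [Algebra ℂ A] {B B' : H →ₗ[ℂ] Module.Dual ℂ A}
    {ΔH : H →ₐ[ℂ] H ⊗[ℂ] H} {εH : H →ₐ[ℂ] ℂ} {ΔA : A →ₐ[ℂ] A ⊗[ℂ] A} {εA : A →ₐ[ℂ] ℂ}
    (hB : IsDualPairing B ΔH εH ΔA εA) (hB' : IsDualPairing B' ΔH εH ΔA εA) {s : Set H}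
    {t : Set A} (hs : Algebra.adjoin ℂ s = ⊤) (ht : Algebra.adjoin ℂ t = ⊤)
    (hΔ : ∀ x ∈ s, ΔH x ∈ Submodule.span ℂ (Set.image2 (· ⊗ₜ ·) s s))
    (h : ∀ x ∈ s, ∀ f ∈ t, B x f = B' x f) : B = B' := by
  obtain ⟨mul_left, mul_right, one_left, one_right⟩ := hB
  obtain ⟨mul_left', mul_right', one_left', one_right'⟩ := hB'
  have on_s (f : A) : ∀ x ∈ s, B x f = B' x f := by
    induction (ht ▸ Algebra.mem_top : f ∈ Algebra.adjoin ℂ t) using Algebra.adjoin_induction with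
    | mem f hf => exact fun x hx => h x hx f hf
    | algebraMap c =>
      intro x _
      rw [Algebra.algebraMap_eq_smul_one, map_smul, map_smul, one_right, one_right']
    | add f g _ _ hf hg => intro x hx; rw [map_add, map_add, hf x hx, hg x hx]
    | mul f g _ _ hf hg =>
      intro x hx
      rw [mul_right, mul_right']
      have hz := hΔ x hx
      generalize ΔH x = z at hz ⊢
      induction hz using Submodule.span_induction with
      | mem z hz =>
        obtain ⟨a, ha, b, hb, rfl⟩ := hz
        simp [pair2_tmul, hf a ha, hg b hb]
      | zero => simp
      | add z z' _ _ hz hz' => simp only [map_add, LinearMap.add_apply, hz, hz']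
      | smul c z _ hz => simp only [map_smul, LinearMap.smul_apply, hz]
  ext x f
  induction (hs ▸ Algebra.mem_top : x ∈ Algebra.adjoin ℂ s) using Algebra.adjoin_induction
    generalizing f with
  | mem x hx => exact on_s f x hx
  | algebraMap c => simp [Algebra.algebraMap_eq_smul_one, one_left, one_left']
  | add x y _ _ hx hy => simp only [map_add, LinearMap.add_apply, hx, hy]
  | mul x y _ _ hx hy =>
    rw [mul_left, mul_left', pair2_tmul, pair2_tmul, LinearMap.ext hx, LinearMap.ext hy]

variable [Bialgebra ℂ A]

theorem dualDistrib_convMul (φ ψ φ' ψ' : WithConv (Module.Dual ℂ A)) :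
    toConv (TensorProduct.dualDistrib ℂ A A (φ.ofConv ⊗ₜ ψ.ofConv)) *
        toConv (TensorProduct.dualDistrib ℂ A A (φ'.ofConv ⊗ₜ ψ'.ofConv)) =
      toConv (TensorProduct.dualDistrib ℂ A A ((φ * φ').ofConv ⊗ₜ (ψ * ψ').ofConv)) := by
  have key (u v : A ⊗[ℂ] A) :
      LinearMap.mul' ℂ ℂ (TensorProduct.map
        (TensorProduct.dualDistrib ℂ A A (φ.ofConv ⊗ₜ ψ.ofConv))
        (TensorProduct.dualDistrib ℂ A A (φ'.ofConv ⊗ₜ ψ'.ofConv))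
        (TensorProduct.AlgebraTensorModule.tensorTensorTensorComm ℂ ℂ ℂ ℂ A A A A (u ⊗ₜ v))) =
      LinearMap.mul' ℂ ℂ (TensorProduct.map φ.ofConv φ'.ofConv u) *
        LinearMap.mul' ℂ ℂ (TensorProduct.map ψ.ofConv ψ'.ofConv v) := by
    induction u with
    | zero => simp
    | add u u' hu hu' => simp only [TensorProduct.add_tmul, map_add, hu, hu', add_mul]
    | tmul a₁ a₂ =>
      induction v with
      | zero => simp
      | add v v' hv hv' => simp only [TensorProduct.tmul_add, map_add, hv, hv', mul_add]
      | tmul b₁ b₂ => simp; ring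
  ext a b
  exact key (comul a) (comul b)

variable (φ : H →ₐ[ℂ] WithConv (Module.Dual ℂ A))

def pairingOfConvHom : H →ₗ[ℂ] Module.Dual ℂ A :=
  (WithConv.linearEquiv ℂ (Module.Dual ℂ A)).toLinearMap ∘ₗ φ.toLinearMap

theorem pairingOfConvHom_apply (x : H) : pairingOfConvHom φ x = (φ x).ofConv := rfl

theorem pair2_pairingOfConvHom_mul (X Y : H ⊗[ℂ] H) :
    toConv (pair2 (pairingOfConvHom φ) (X * Y)) =
      toConv (pair2 (pairingOfConvHom φ) X) * toConv (pair2 (pairingOfConvHom φ) Y) := by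
  induction X with
  | zero => simp
  | add X X' hX hX' => simp only [add_mul, map_add, toConv_add, hX, hX']
  | tmul x₁ x₂ =>
    induction Y with
    | zero => simp
    | add Y Y' hY hY' => simp only [mul_add, map_add, toConv_add, hY, hY']
    | tmul y₁ y₂ =>
      simp only [Algebra.TensorProduct.tmul_mul_tmul, pair2_tmul, pairingOfConvHom_apply,
        map_mul, dualDistrib_convMul]

theorem isDualPairing_pairingOfConvHom {ΔH : H →ₐ[ℂ] H ⊗[ℂ] H} {εH : H →ₐ[ℂ] ℂ} {s : Set H}
    (hs : Algebra.adjoin ℂ s = ⊤)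
    (hmul : ∀ x ∈ s, ∀ f g : A, φ x (f * g) = pair2 (pairingOfConvHom φ) (ΔH x) (f ⊗ₜ g))
    (hone : ∀ x ∈ s, φ x 1 = εH x) :
    IsDualPairing (pairingOfConvHom φ) ΔH εH (Bialgebra.comulAlgHom ℂ A)
      (Bialgebra.counitAlgHom ℂ A) := by
  refine ⟨fun x y f => ?_, fun x f g => ?_, fun f => ?_, fun x => ?_⟩
  · rw [pairingOfConvHom_apply, map_mul]
    rfl
  · suffices pairingOfConvHom φ x ∘ₗ LinearMap.mul' ℂ A = pair2 (pairingOfConvHom φ) (ΔH x) by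
      simpa using LinearMap.congr_fun this (f ⊗ₜ g)
    induction (hs ▸ Algebra.mem_top : x ∈ Algebra.adjoin ℂ s) using Algebra.adjoin_induction with
    | mem x hx => exact TensorProduct.ext' (hmul x hx)
    | algebraMap c =>
      refine TensorProduct.ext' fun f g => ?_
      simp [pairingOfConvHom_apply, Algebra.algebraMap_eq_smul_one, pair2_tmul,
        Algebra.TensorProduct.one_def, Bialgebra.counit_mul]
    | add x y _ _ hx hy => simp only [map_add, LinearMap.add_comp, hx, hy]
    | mul x y _ _ hx hy =>
      -- multiplication `A ⊗ A → A` is a coalgebra map, so composing with it is multiplicative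
      apply toConv_injective
      rw [map_mul ΔH, pair2_pairingOfConvHom_mul, ← hx, ← hy, pairingOfConvHom_apply, map_mul φ]
      exact congrArg toConv
        (LinearMap.convMul_comp_coalgHom_distrib (φ x) (φ y) (Bialgebra.mulCoalgHom ℂ A))
  · simp [pairingOfConvHom_apply]
  · induction (hs ▸ Algebra.mem_top : x ∈ Algebra.adjoin ℂ s) using Algebra.adjoin_induction with
    | mem x hx => exact hone x hx
    | algebraMap c => simp [pairingOfConvHom_apply]
    | add x y _ _ hx hy => simp_all [pairingOfConvHom_apply]
    | mul x y _ _ hx hy =>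
      rw [pairingOfConvHom_apply] at hx hy ⊢
      rw [map_mul φ, convMul_apply_one, hx, hy, map_mul]

end DualPairing

theorem mul_sub_mul_eq_of_mul_eq_one {S : Type*} [Ring S] {u v : S} (huv : u * v = 1)
    (hvu : v * u = 1) (x : S) : v * x - x * v = v * (x * u - u * x) * v := by
  simp only [mul_sub, sub_mul, ← mul_assoc, hvu, one_mul]
  rw [mul_assoc _ u v, huv, mul_one]

/-- Row `0` carries the values of `t⁻¹, h, y` on the generator and the diagonal below it the value
of `t`; products of matrices of this shape keep it, which makes the entries `(0,0)`, `(1,1)`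
multiplicative and the entries `(0,1)`, `(0,2)` twisted derivations. -/
def SLj.repMatrix (p : ℂ) (j : Fin 4) : Matrix (Fin 3) (Fin 3) ℂ :=
  !![vals p 3 j, vals p 0 j, vals p 1 j; 0, vals p 2 j, 0; 0, 0, vals p 2 j]

def SLj.rep (p : ℂ) : SLj p →ₐ[ℂ] Matrix (Fin 3) (Fin 3) ℂ :=
  RingQuot.liftAlgHom ℂ ⟨FreeAlgebra.lift ℂ (SLj.repMatrix p), by
    rintro _ _ ⟨⟩ <;>
    · simp only [map_sub, map_mul, map_smul, map_one, FreeAlgebra.lift_ι_apply]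
      ext i j
      fin_cases i <;> fin_cases j <;>
        simp [SLj.repMatrix, vals] <;>
        ring⟩

@[simp]
theorem SLj.rep_agen (p : ℂ) (j : Fin 4) : SLj.rep p (agen p j) = SLj.repMatrix p j := by
  simp [SLj.rep, agen]

theorem SLj.rep_shape (p : ℂ) (f : SLj p) :
    SLj.rep p f 1 0 = 0 ∧ SLj.rep p f 1 2 = 0 ∧ SLj.rep p f 2 0 = 0 ∧ SLj.rep p f 2 1 = 0 ∧
      SLj.rep p f 2 2 = SLj.rep p f 1 1 := by
  induction (SLj.adjoin_range_agen p ▸ Algebra.mem_top : f ∈ Algebra.adjoin ℂ _)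
    using Algebra.adjoin_induction with
  | mem f hf => obtain ⟨j, rfl⟩ := hf; simp [SLj.repMatrix]
  | algebraMap c => simp [Matrix.algebraMap_matrix_apply]
  | add f g _ _ hf hg => simp_all
  | mul f g _ _ hf hg => simp_all [Matrix.mul_apply, Fin.sum_univ_three]

/-- The functional paired with the generator `ugen p i`: the entry `(0,1)`, `(0,2)`, `(1,1)` or
`(0,0)` of `SLj.rep` for `h`, `y`, `t`, `t⁻¹` respectively. -/
def SLj.dualGen (p : ℂ) (i : Fin 4) : WithConv (Module.Dual ℂ (SLj p)) :=
  toConv (Matrix.entryLinearMap ℂ ℂ (![0, 0, 1, 0] i) (![1, 2, 1, 0] i) ∘ₗ (SLj.rep p).toLinearMap)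

theorem SLj.dualGen_apply (p : ℂ) (i : Fin 4) (f : SLj p) :
    SLj.dualGen p i f = SLj.rep p f (![0, 0, 1, 0] i) (![1, 2, 1, 0] i) := rfl

@[simp]
theorem SLj.dualGen_agen (p : ℂ) (i j : Fin 4) : SLj.dualGen p i (agen p j) = vals p i j := by
  fin_cases i <;> simp [SLj.dualGen_apply, SLj.repMatrix]

@[simp]
theorem SLj.dualGen_one (p : ℂ) (i : Fin 4) : SLj.dualGen p i 1 = ![0, 0, 1, 1] i := by
  fin_cases i <;> simp [SLj.dualGen_apply]

theorem SLj.dualGen_mem_twistedDerivations (p : ℂ) :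
    SLj.dualGen p 0 ∈ twistedDerivations (SLj.dualGen p 3) (SLj.dualGen p 2) ∧
    SLj.dualGen p 1 ∈ twistedDerivations (SLj.dualGen p 3) (SLj.dualGen p 2) ∧
    SLj.dualGen p 2 ∈ twistedDerivations 0 (SLj.dualGen p 2) ∧
    SLj.dualGen p 3 ∈ twistedDerivations 0 (SLj.dualGen p 3) := by
  refine ⟨fun f g => ?_, fun f g => ?_, fun f g => ?_, fun f g => ?_⟩ <;>
  · obtain ⟨f10, f12, -, -, -⟩ := SLj.rep_shape p f
    obtain ⟨g10, g12, g20, g21, g22⟩ := SLj.rep_shape p g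
    simp [SLj.dualGen_apply, Matrix.mul_apply, Fin.sum_univ_three, f10, f12, g10, g12, g20, g21,
      g22]

def SLj.fundamental (p : ℂ) : Matrix (Fin 2) (Fin 2) (SLj p) :=
  !![agen p 0, agen p 1; agen p 2, agen p 3]

section SLjConvolution

variable {p : ℂ} {ΔA : SLj p →ₐ[ℂ] (SLj p ⊗[ℂ] SLj p)} {εA : SLj p →ₐ[ℂ] ℂ}

theorem SLj.comul_coassoc (hΔA : IsAComul p ΔA) :
    (Algebra.TensorProduct.assoc ℂ ℂ ℂ (SLj p) (SLj p) (SLj p)).toAlgHom.comp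
      ((Algebra.TensorProduct.map ΔA (.id ℂ (SLj p))).comp ΔA) =
      (Algebra.TensorProduct.map (.id ℂ (SLj p)) ΔA).comp ΔA := by
  obtain ⟨h0, h1, h2, h3⟩ := hΔA
  refine SLj.algHom_ext fun i => ?_
  fin_cases i <;>
    simp [h0, h1, h2, h3, TensorProduct.add_tmul, TensorProduct.tmul_add] <;> abel

theorem SLj.counit_comul_left (hΔA : IsAComul p ΔA) (hεA : IsACounit p εA) :
    (Algebra.TensorProduct.map εA (.id ℂ (SLj p))).comp ΔA =
      (Algebra.TensorProduct.lid ℂ (SLj p)).symm.toAlgHom := by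
  obtain ⟨h0, h1, h2, h3⟩ := hΔA
  obtain ⟨e0, e1, e2, e3⟩ := hεA
  refine SLj.algHom_ext fun i => ?_
  fin_cases i <;> simp [h0, h1, h2, h3, e0, e1, e2, e3]

theorem SLj.counit_comul_right (hΔA : IsAComul p ΔA) (hεA : IsACounit p εA) :
    (Algebra.TensorProduct.map (.id ℂ (SLj p)) εA).comp ΔA =
      (Algebra.TensorProduct.rid ℂ ℂ (SLj p)).symm.toAlgHom := by
  obtain ⟨h0, h1, h2, h3⟩ := hΔA
  obtain ⟨e0, e1, e2, e3⟩ := hεA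
  refine SLj.algHom_ext fun i => ?_
  fin_cases i <;> simp [h0, h1, h2, h3, e0, e1, e2, e3]

theorem SLj.comul_fundamental (hΔA : IsAComul p ΔA) (i j : Fin 2) :
    ΔA (SLj.fundamental p i j) = ∑ k, SLj.fundamental p i k ⊗ₜ SLj.fundamental p k j := by
  obtain ⟨h0, h1, h2, h3⟩ := hΔA
  fin_cases i <;> fin_cases j <;> simp [SLj.fundamental, h0, h1, h2, h3]

theorem SLj.counit_fundamental (hεA : IsACounit p εA) (i j : Fin 2) :
    εA (SLj.fundamental p i j) = (1 : Matrix (Fin 2) (Fin 2) ℂ) i j := by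
  obtain ⟨e0, e1, e2, e3⟩ := hεA
  fin_cases i <;> fin_cases j <;> simp [SLj.fundamental, e0, e1, e2, e3]

variable (hΔA : IsAComul p ΔA) (hεA : IsACounit p εA)

/-- Built field by field rather than with `Bialgebra.ofAlgHom`, so that its underlying algebra is
reducibly the one of the quotient. -/
abbrev SLj.bialgebra : Bialgebra ℂ (SLj p) where
  comul := ΔA.toLinearMap
  counit := εA.toLinearMap
  coassoc := congrArg AlgHom.toLinearMap (SLj.comul_coassoc hΔA)
  rTensor_counit_comp_comul := congrArg AlgHom.toLinearMap (SLj.counit_comul_left hΔA hεA)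
  lTensor_counit_comp_comul := congrArg AlgHom.toLinearMap (SLj.counit_comul_right hΔA hεA)
  counit_one := map_one εA
  mul_compr₂_counit := by ext; exact map_mul εA _ _
  comul_one := map_one ΔA
  mul_compr₂_comul := by ext; exact map_mul ΔA _ _

def SLj.evalOne :
    letI := SLj.bialgebra hΔA hεA
    WithConv (Module.Dual ℂ (SLj p)) →ₐ[ℂ] ℂ :=
  letI := SLj.bialgebra hΔA hεA
  evalGroupLike (IsGroupLikeElem.one (R := ℂ) (A := SLj p))

def SLj.evalFundamental :
    letI := SLj.bialgebra hΔA hεA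
    WithConv (Module.Dual ℂ (SLj p)) →ₐ[ℂ] Matrix (Fin 2) (Fin 2) ℂ :=
  letI := SLj.bialgebra hΔA hεA
  evalMultiplicativeMatrix (SLj.fundamental p) (SLj.comul_fundamental hΔA)
    (SLj.counit_fundamental hεA)

theorem SLj.evalOne_apply (φ : WithConv (Module.Dual ℂ (SLj p))) :
    SLj.evalOne hΔA hεA φ = φ 1 := rfl

theorem SLj.evalFundamental_apply (φ : WithConv (Module.Dual ℂ (SLj p))) :
    SLj.evalFundamental hΔA hεA φ = (SLj.fundamental p).map φ := rfl

@[simp]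
theorem SLj.evalOne_dualGen (i : Fin 4) :
    SLj.evalOne hΔA hεA (SLj.dualGen p i) = ![0, 0, 1, 1] i :=
  SLj.dualGen_one p i

@[simp]
theorem SLj.evalFundamental_dualGen (i : Fin 4) :
    SLj.evalFundamental hΔA hεA (SLj.dualGen p i) =
      !![vals p i 0, vals p i 1; vals p i 2, vals p i 3] := by
  ext j k
  fin_cases j <;> fin_cases k <;> simp [SLj.evalFundamental_apply, SLj.fundamental]

theorem SLj.conv_eq_of_sub_mem {χ₁ χ₂ φ ψ : WithConv (Module.Dual ℂ (SLj p))}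
    (hθ : φ - ψ ∈ twistedDerivations χ₁ χ₂)
    (h1 : SLj.evalOne hΔA hεA φ = SLj.evalOne hΔA hεA ψ)
    (hM : SLj.evalFundamental hΔA hεA φ = SLj.evalFundamental hΔA hεA ψ) : φ = ψ := by
  refine sub_eq_zero.mp (eq_zero_of_mem_twistedDerivations hθ (SLj.adjoin_range_agen p)
    (by simpa [SLj.evalOne_apply, sub_eq_zero] using h1) ?_)
  rintro _ ⟨j, rfl⟩
  have entry := congrFun₂ hM
  simp only [SLj.evalFundamental_apply, Matrix.map_apply] at entry
  rw [ofConv_sub, LinearMap.sub_apply, sub_eq_zero]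
  fin_cases j
  exacts [entry 0 0, entry 0 1, entry 1 0, entry 1 1]

local notation "𝐡" => SLj.dualGen p 0
local notation "𝐲" => SLj.dualGen p 1
local notation "𝐭" => SLj.dualGen p 2
local notation "𝐭⁻¹" => SLj.dualGen p 3

theorem SLj.conv_t_mul_tinv : letI := SLj.bialgebra hΔA hεA; 𝐭 * 𝐭⁻¹ = 1 := by
  let _ := SLj.bialgebra hΔA hεA
  obtain ⟨-, -, ht, hs⟩ := SLj.dualGen_mem_twistedDerivations p
  refine SLj.conv_eq_of_sub_mem hΔA hεA
    (sub_mem_twistedDerivations (mul_mem_twistedDerivations_zero ht hs)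
      one_mem_twistedDerivations) ?_ ?_ <;>
  simp [vals, Matrix.one_fin_two]

theorem SLj.conv_tinv_mul_t : letI := SLj.bialgebra hΔA hεA; 𝐭⁻¹ * 𝐭 = 1 := by
  let _ := SLj.bialgebra hΔA hεA
  obtain ⟨-, -, ht, hs⟩ := SLj.dualGen_mem_twistedDerivations p
  refine SLj.conv_eq_of_sub_mem hΔA hεA
    (sub_mem_twistedDerivations (mul_mem_twistedDerivations_zero hs ht)
      one_mem_twistedDerivations) ?_ ?_ <;>
  simp [vals, Matrix.one_fin_two]

theorem SLj.conv_h_t : letI := SLj.bialgebra hΔA hεA; 𝐡 * 𝐭 - 𝐭 * 𝐡 = 𝐭 * 𝐭 - 1 := by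
  let _ := SLj.bialgebra hΔA hεA
  obtain ⟨hh, -, ht, -⟩ := SLj.dualGen_mem_twistedDerivations p
  have hht := mul_mem_twistedDerivations_of_right hh ht
  have hth := mul_mem_twistedDerivations_of_left ht hh
  rw [SLj.conv_tinv_mul_t hΔA hεA] at hht
  rw [SLj.conv_t_mul_tinv hΔA hεA] at hth
  refine SLj.conv_eq_of_sub_mem hΔA hεA (sub_mem (sub_mem hht hth)
    (sub_mem_twistedDerivations (mul_mem_twistedDerivations_zero ht ht)
      one_mem_twistedDerivations)) ?_ ?_ <;>
  simp [vals, Matrix.one_fin_two]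

theorem SLj.conv_y_t :
    letI := SLj.bialgebra hΔA hεA; 𝐲 * 𝐭 - 𝐭 * 𝐲 = (-(p / 2)) • (𝐡 * 𝐭 + 𝐭 * 𝐡) := by
  let _ := SLj.bialgebra hΔA hεA
  obtain ⟨hh, hy, ht, -⟩ := SLj.dualGen_mem_twistedDerivations p
  have hht := mul_mem_twistedDerivations_of_right hh ht
  have hth := mul_mem_twistedDerivations_of_left ht hh
  have hyt := mul_mem_twistedDerivations_of_right hy ht
  have hty := mul_mem_twistedDerivations_of_left ht hy
  rw [SLj.conv_tinv_mul_t hΔA hεA] at hht hyt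
  rw [SLj.conv_t_mul_tinv hΔA hεA] at hth hty
  refine SLj.conv_eq_of_sub_mem hΔA hεA
    (sub_mem (sub_mem hyt hty) (Submodule.smul_mem _ _ (add_mem hht hth))) ?_ ?_ <;>
  simp [vals]
  ring_nf

theorem SLj.conv_tinv_h :
    letI := SLj.bialgebra hΔA hεA; 𝐭⁻¹ * 𝐡 - 𝐡 * 𝐭⁻¹ = 1 - 𝐭⁻¹ * 𝐭⁻¹ := by
  let _ := SLj.bialgebra hΔA hεA
  have hts := SLj.conv_t_mul_tinv hΔA hεA
  have hst := SLj.conv_tinv_mul_t hΔA hεA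
  rw [mul_sub_mul_eq_of_mul_eq_one hts hst, SLj.conv_h_t hΔA hεA, mul_sub, sub_mul, mul_one,
    ← mul_assoc, hst, one_mul, hts]

theorem SLj.conv_tinv_y :
    letI := SLj.bialgebra hΔA hεA
    𝐭⁻¹ * 𝐲 - 𝐲 * 𝐭⁻¹ = (-(p / 2)) • (𝐭⁻¹ * 𝐡 + 𝐡 * 𝐭⁻¹) := by
  let _ := SLj.bialgebra hΔA hεA
  have hts := SLj.conv_t_mul_tinv hΔA hεA
  have hst := SLj.conv_tinv_mul_t hΔA hεA
  rw [mul_sub_mul_eq_of_mul_eq_one hts hst, SLj.conv_y_t hΔA hεA, mul_smul_comm, smul_mul_assoc,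
    mul_add, add_mul, ← mul_assoc, ← mul_assoc, hst, one_mul, mul_assoc, hts, mul_one]

theorem SLj.conv_h_y :
    letI := SLj.bialgebra hΔA hεA
    𝐡 * 𝐲 - 𝐲 * 𝐡 = (-(1 / 2 : ℂ)) • (𝐲 * 𝐭 + 𝐭 * 𝐲 + 𝐲 * 𝐭⁻¹ + 𝐭⁻¹ * 𝐲) := by
  let _ := SLj.bialgebra hΔA hεA
  obtain ⟨hh, hy, ht, hs⟩ := SLj.dualGen_mem_twistedDerivations p
  have pointwise {φ ψ : WithConv (Module.Dual ℂ (SLj p))} (h : φ = ψ) (x : SLj p) :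
      φ x = ψ x := by
    rw [h]
  have hts := pointwise (SLj.conv_t_mul_tinv hΔA hεA)
  have hst := pointwise (SLj.conv_tinv_mul_t hΔA hεA)
  have hht := pointwise (sub_eq_iff_eq_add.mp (SLj.conv_h_t hΔA hεA))
  have hyt := pointwise (sub_eq_iff_eq_add.mp (SLj.conv_y_t hΔA hεA))
  have hsh := pointwise (sub_eq_iff_eq_add.mp (SLj.conv_tinv_h hΔA hεA))
  have hsy := pointwise (sub_eq_iff_eq_add.mp (SLj.conv_tinv_y hΔA hεA))
  simp only [ofConv_sub, ofConv_add, ofConv_smul, LinearMap.sub_apply, LinearMap.add_apply,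
    LinearMap.smul_apply, smul_eq_mul] at hht hyt hsh hsy
  refine SLj.conv_eq_of_sub_mem hΔA hεA (χ₁ := 𝐭⁻¹ * 𝐭⁻¹) (χ₂ := 𝐭 * 𝐭) (fun f g => ?_) ?_ ?_
  · -- expand by the twisted Leibniz rule; the first-order relations cancel the cross terms
    simp only [ofConv_sub, ofConv_add, ofConv_smul, LinearMap.sub_apply, LinearMap.add_apply,
      LinearMap.smul_apply, smul_eq_mul, convMul_apply_mul hh hy, convMul_apply_mul hy hh,
      convMul_apply_mul hy ht, convMul_apply_mul ht hy, convMul_apply_mul hy hs,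
      convMul_apply_mul hs hy, mul_zero, zero_mul, ofConv_zero, LinearMap.zero_apply,
      add_zero, zero_add, hts, hst, hht, hyt, hsh, hsy]
    ring
  · simp
  · simp only [map_sub, map_mul, map_add, map_smul, SLj.evalFundamental_dualGen]
    ext i j
    fin_cases i <;> fin_cases j <;> simp [vals]
    all_goals norm_num

end SLjConvolution

section Pairing

variable {p : ℂ} {ΔA : SLj p →ₐ[ℂ] (SLj p ⊗[ℂ] SLj p)} {εA : SLj p →ₐ[ℂ] ℂ}
  (hΔA : IsAComul p ΔA) (hεA : IsACounit p εA)

def Uj.pairingHom :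
    letI := SLj.bialgebra hΔA hεA
    Uj p →ₐ[ℂ] WithConv (Module.Dual ℂ (SLj p)) :=
  letI := SLj.bialgebra hΔA hεA
  RingQuot.liftAlgHom ℂ ⟨FreeAlgebra.lift ℂ (SLj.dualGen p), by
    rintro _ _ ⟨⟩ <;>
      simp only [map_sub, map_mul, map_smul, map_add, map_one, FreeAlgebra.lift_ι_apply]
    exacts [SLj.conv_t_mul_tinv hΔA hεA, SLj.conv_tinv_mul_t hΔA hεA, SLj.conv_h_t hΔA hεA,
      SLj.conv_y_t hΔA hεA, SLj.conv_h_y hΔA hεA]⟩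

theorem Uj.pairingHom_ugen (i : Fin 4) :
    Uj.pairingHom hΔA hεA (ugen p i) = SLj.dualGen p i := by
  simp [Uj.pairingHom, ugen]

def Uj.pairing : Uj p →ₗ[ℂ] Module.Dual ℂ (SLj p) :=
  letI := SLj.bialgebra hΔA hεA
  pairingOfConvHom (Uj.pairingHom hΔA hεA)

theorem Uj.pairing_ugen_agen (i j : Fin 4) :
    Uj.pairing hΔA hεA (ugen p i) (agen p j) = vals p i j := by
  rw [← SLj.dualGen_agen p i j, ← Uj.pairingHom_ugen hΔA hεA]
  rfl

theorem Uj.isDualPairing_pairing {ΔH : Uj p →ₐ[ℂ] (Uj p ⊗[ℂ] Uj p)} {εH : Uj p →ₐ[ℂ] ℂ}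
    (hΔH : IsUComul p ΔH) (hεH : IsUCounit p εH) :
    IsDualPairing (Uj.pairing hΔA hεA) ΔH εH ΔA εA := by
  let _ := SLj.bialgebra hΔA hεA
  refine isDualPairing_pairingOfConvHom (Uj.pairingHom hΔA hεA) (Uj.adjoin_range_ugen p) ?_ ?_
  · rintro _ ⟨i, rfl⟩ f g
    obtain ⟨hh, hy, ht, hs⟩ := SLj.dualGen_mem_twistedDerivations p
    obtain ⟨Δh, Δy, Δt, Δs⟩ := hΔH
    fin_cases i <;>
    simp only [Fin.zero_eta, Fin.mk_one, Fin.reduceFinMk, Δh, Δy, Δt, Δs, map_add,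
      LinearMap.add_apply, pair2_tmul, TensorProduct.dualDistrib_apply, pairingOfConvHom_apply,
      Uj.pairingHom_ugen, hh f g, hy f g, ht f g, hs f g, ofConv_zero, LinearMap.zero_apply,
      zero_mul, zero_add] <;>
    ring
  · rintro _ ⟨i, rfl⟩
    obtain ⟨e0, e1, e2, e3⟩ := hεH
    fin_cases i <;> simp [Uj.pairingHom_ugen, e0, e1, e2, e3]

theorem Uj.comul_ugen_mem_span {ΔH : Uj p →ₐ[ℂ] (Uj p ⊗[ℂ] Uj p)} (hΔH : IsUComul p ΔH)
    (i : Fin 4) : ΔH (ugen p i) ∈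
      Submodule.span ℂ (Set.image2 (· ⊗ₜ ·) (Set.range (ugen p)) (Set.range (ugen p))) := by
  have mem (j k : Fin 4) : ugen p j ⊗ₜ[ℂ] ugen p k ∈
      Submodule.span ℂ (Set.image2 (· ⊗ₜ ·) (Set.range (ugen p)) (Set.range (ugen p))) :=
    Submodule.subset_span ⟨_, ⟨j, rfl⟩, _, ⟨k, rfl⟩, rfl⟩
  obtain ⟨Δh, Δy, Δt, Δs⟩ := hΔH
  fin_cases i
  exacts [Δh ▸ add_mem (mem 0 2) (mem 3 0), Δy ▸ add_mem (mem 1 2) (mem 3 1), Δt ▸ mem 2 2,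
    Δs ▸ mem 3 3]

end Pairing

/-- There is a unique dual pairing of Hopf algebras between `U_p^{(j)}(sl2)` and
`SL_p^{(j)}(2,ℂ)` with the prescribed values on the generators. -/
theorem jordanian_pairing_exists_unique (p : ℂ)
    (ΔH : Uj p →ₐ[ℂ] (Uj p ⊗[ℂ] Uj p)) (εH : Uj p →ₐ[ℂ] ℂ)
    (ΔA : SLj p →ₐ[ℂ] (SLj p ⊗[ℂ] SLj p)) (εA : SLj p →ₐ[ℂ] ℂ)
    (hΔH : IsUComul p ΔH) (hεH : IsUCounit p εH)
    (hΔA : IsAComul p ΔA) (hεA : IsACounit p εA) :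
    ∃! B : Uj p →ₗ[ℂ] Module.Dual ℂ (SLj p),
      IsDualPairing B ΔH εH ΔA εA ∧
      (∀ i j : Fin 4, B (ugen p i) (agen p j) = vals p i j) := by
  have hpairing := Uj.isDualPairing_pairing hΔA hεA hΔH hεH
  refine ⟨Uj.pairing hΔA hεA, ⟨hpairing, Uj.pairing_ugen_agen hΔA hεA⟩, ?_⟩
  rintro B ⟨hB, hBvals⟩
  refine hB.ext hpairing (Uj.adjoin_range_ugen p) (SLj.adjoin_range_agen p)
    (by rintro _ ⟨i, rfl⟩; exact Uj.comul_ugen_mem_span hΔH i) ?_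
  rintro _ ⟨i, rfl⟩ _ ⟨j, rfl⟩
  rw [hBvals, Uj.pairing_ugen_agen]
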